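/- (Theorem 1, strict decrease form.) Assume A_q = exp(hH) and that Q − P + A_qᵀ P A_q is negative definite. Then along every quantized MPC closed-loop trajectory (x_q(k), r(k), U*(k)), for each k either V(x_q(k+1), r(k+1)) < V(x_q(k), r(k)) or V(x_q(k), r(k)) = 0; and if V(x_q(k), r(k)) = 0 for some k, then V(x_q(j), r(j)) = 0 for all j ≥ k. -/

import Mathlib

open Matrix Filter Topology

/-- Predicted states of the quantized system: `x₀ = x`, `x_{i+1} = A_q x_i + h B_q u_i`
(inputs beyond the horizon are taken to be `0`, but they are never used below). -/
noncomputable def predState {n m N : ℕ} (Aq : Matrix (Fin n) (Fin n) ℝ)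
    (Bq : Matrix (Fin n) (Fin m) ℝ) (h : ℝ) (x : Fin n → ℝ)
    (U : Fin N → Fin m → ℝ) : ℕ → (Fin n → ℝ)
  | 0 => x
  | i + 1 => Aq *ᵥ (predState Aq Bq h x U i) +
      h • (Bq *ᵥ (if hi : i < N then U ⟨i, hi⟩ else 0))

/-- Reference states: `r_i = (exp (h H))^i r`. -/
noncomputable def refState {n : ℕ} (H : Matrix (Fin n) (Fin n) ℝ) (h : ℝ)
    (r : Fin n → ℝ) (i : ℕ) : Fin n → ℝ :=
  ((NormedSpace.exp (h • H)) ^ i) *ᵥ r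

/-- The MPC cost
`J(x, r, U) = (x_N - r_N)ᵀ P (x_N - r_N) + Σ_{i<N} [(x_i - r_i)ᵀ Q (x_i - r_i) + u_iᵀ R u_i]`. -/
noncomputable def mpcCost {n m N : ℕ} (Aq : Matrix (Fin n) (Fin n) ℝ)
    (Bq : Matrix (Fin n) (Fin m) ℝ) (H : Matrix (Fin n) (Fin n) ℝ) (h : ℝ)
    (P Q : Matrix (Fin n) (Fin n) ℝ) (R : Matrix (Fin m) (Fin m) ℝ)
    (x r : Fin n → ℝ) (U : Fin N → Fin m → ℝ) : ℝ :=
  (predState Aq Bq h x U N - refState H h r N) ⬝ᵥ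
      (P *ᵥ (predState Aq Bq h x U N - refState H h r N)) +
    ∑ i : Fin N,
      ((predState Aq Bq h x U i - refState H h r i) ⬝ᵥ
          (Q *ᵥ (predState Aq Bq h x U i - refState H h r i)) +
        (U i) ⬝ᵥ (R *ᵥ (U i)))

/-- The quantized input set `𝒰^N` with `𝒰 = {-1,0,1}^m`. -/
def quantSet (m N : ℕ) : Set (Fin N → Fin m → ℝ) :=
  {U | ∀ i j, U i j = -1 ∨ U i j = 0 ∨ U i j = 1}

/-- The value function `V(x,r) = min_{U ∈ 𝒰^N} J(x,r,U)`. -/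
noncomputable def valueFn {n m N : ℕ} (Aq : Matrix (Fin n) (Fin n) ℝ)
    (Bq : Matrix (Fin n) (Fin m) ℝ) (H : Matrix (Fin n) (Fin n) ℝ) (h : ℝ)
    (P Q : Matrix (Fin n) (Fin n) ℝ) (R : Matrix (Fin m) (Fin m) ℝ)
    (x r : Fin n → ℝ) : ℝ :=
  sInf ((fun U => mpcCost Aq Bq H h P Q R x r U) '' quantSet m N)

/-- The shifted input sequence: drop `u₀` and append `0`. -/
def shiftSeq {m N : ℕ} (U : Fin N → Fin m → ℝ) : Fin N → Fin m → ℝ :=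
  fun i => if hi : (i : ℕ) + 1 < N then U ⟨(i : ℕ) + 1, hi⟩ else 0

/-!
The tail of an optimal input sequence, padded with a zero input, is admissible at the next step.
Since `A_q = exp (h H)`, the padded zero input moves the tracking error exactly as the reference
moves, and negativity of `Q - P + A_qᵀ P A_q` lets the terminal weight absorb the extra stage.
Hence `V` drops by at least the stage cost `(x - r)ᵀ Q (x - r)`, which is positive unless `x = r`;
and at `x = r` the zero input tracks the reference exactly, so `V = 0`.
-/

namespace Matrix

variable {ι : Type*} [Fintype ι] {M : Matrix ι ι ℝ}

lemma PosSemidef.dotProduct_mulVec_nonneg_real (hM : M.PosSemidef) (x : ι → ℝ) :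
    0 ≤ x ⬝ᵥ (M *ᵥ x) := by
  simpa using hM.dotProduct_mulVec_nonneg x

lemma PosDef.dotProduct_mulVec_pos_real (hM : M.PosDef) {x : ι → ℝ} (hx : x ≠ 0) :
    0 < x ⬝ᵥ (M *ᵥ x) := by
  simpa using hM.dotProduct_mulVec_pos hx

end Matrix

open Matrix

section QuantSet

variable {m N : ℕ}

lemma zero_mem_quantSet : (0 : Fin N → Fin m → ℝ) ∈ quantSet m N :=
  fun _ _ => Or.inr (Or.inl rfl)

lemma shiftSeq_mem_quantSet {U : Fin N → Fin m → ℝ} (hU : U ∈ quantSet m N) :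
    shiftSeq U ∈ quantSet m N := by
  intro i j
  unfold shiftSeq
  split_ifs
  · exact hU _ j
  · exact zero_mem_quantSet i j

end QuantSet

def inputAt {m N : ℕ} (U : Fin N → Fin m → ℝ) (i : ℕ) : Fin m → ℝ :=
  if hi : i < N then U ⟨i, hi⟩ else 0

section Prediction

variable {n m N : ℕ} (Aq H : Matrix (Fin n) (Fin n) ℝ) (Bq : Matrix (Fin n) (Fin m) ℝ) (h : ℝ)

lemma inputAt_fin (U : Fin N → Fin m → ℝ) (i : Fin N) : inputAt U i = U i :=
  dif_pos i.isLt

lemma inputAt_horizon (U : Fin N → Fin m → ℝ) : inputAt U N = 0 :=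
  dif_neg (lt_irrefl N)

lemma inputAt_zero (i : ℕ) : inputAt (0 : Fin N → Fin m → ℝ) i = 0 := by
  unfold inputAt
  split_ifs <;> rfl

lemma inputAt_shiftSeq (U : Fin N → Fin m → ℝ) (i : ℕ) :
    inputAt (shiftSeq U) i = inputAt U (i + 1) := by
  unfold inputAt shiftSeq
  by_cases hi : i < N
  · simp only [dif_pos hi]
  · simp [dif_neg hi, dif_neg (fun h' => hi (Nat.lt_of_succ_lt h'))]

lemma predState_succ (x : Fin n → ℝ) (U : Fin N → Fin m → ℝ) (i : ℕ) :
    predState Aq Bq h x U (i + 1) =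
      Aq *ᵥ predState Aq Bq h x U i + h • (Bq *ᵥ inputAt U i) :=
  rfl

lemma predState_shiftSeq (x : Fin n → ℝ) (U : Fin N → Fin m → ℝ) (i : ℕ) :
    predState Aq Bq h (predState Aq Bq h x U 1) (shiftSeq U) i =
      predState Aq Bq h x U (i + 1) := by
  induction i with
  | zero => rfl
  | succ i ih => rw [predState_succ, ih, inputAt_shiftSeq, ← predState_succ]

lemma refState_mulVec_exp (r : Fin n → ℝ) (i : ℕ) :
    refState H h (NormedSpace.exp (h • H) *ᵥ r) i = refState H h r (i + 1) := by
  simp only [refState, mulVec_mulVec, ← pow_succ]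

variable {Aq H}

lemma refState_succ (hA : Aq = NormedSpace.exp (h • H)) (r : Fin n → ℝ) (i : ℕ) :
    refState H h r (i + 1) = Aq *ᵥ refState H h r i := by
  simp only [refState, hA, mulVec_mulVec, pow_succ']

lemma predState_zero_input (hA : Aq = NormedSpace.exp (h • H)) (r : Fin n → ℝ) (i : ℕ) :
    predState Aq Bq h r (0 : Fin N → Fin m → ℝ) i = refState H h r i := by
  induction i with
  | zero => simp [predState, refState]
  | succ i ih =>
    rw [predState_succ, ih, refState_succ h hA, inputAt_zero, mulVec_zero, smul_zero, add_zero]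

end Prediction

noncomputable def trackingError {n m N : ℕ} (Aq H : Matrix (Fin n) (Fin n) ℝ)
    (Bq : Matrix (Fin n) (Fin m) ℝ) (h : ℝ) (x r : Fin n → ℝ) (U : Fin N → Fin m → ℝ) (i : ℕ) :
    Fin n → ℝ :=
  predState Aq Bq h x U i - refState H h r i

section TrackingError

variable {n m N : ℕ} {Aq H : Matrix (Fin n) (Fin n) ℝ} {Bq : Matrix (Fin n) (Fin m) ℝ} {h : ℝ}

lemma trackingError_zero (x r : Fin n → ℝ) (U : Fin N → Fin m → ℝ) :
    trackingError Aq H Bq h x r U 0 = x - r := by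
  simp [trackingError, predState, refState]

lemma trackingError_shiftSeq (x r : Fin n → ℝ) (U : Fin N → Fin m → ℝ) (i : ℕ) :
    trackingError Aq H Bq h (predState Aq Bq h x U 1) (NormedSpace.exp (h • H) *ᵥ r)
        (shiftSeq U) i =
      trackingError Aq H Bq h x r U (i + 1) := by
  rw [trackingError, predState_shiftSeq, refState_mulVec_exp, trackingError]

lemma trackingError_horizon_succ (hA : Aq = NormedSpace.exp (h • H)) (x r : Fin n → ℝ)
    (U : Fin N → Fin m → ℝ) :
    trackingError Aq H Bq h x r U (N + 1) = Aq *ᵥ trackingError Aq H Bq h x r U N := by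
  rw [trackingError, predState_succ, inputAt_horizon, refState_succ h hA, trackingError,
    mulVec_zero, smul_zero, add_zero, mulVec_sub]

end TrackingError

section Cost

variable {n m N : ℕ} {Aq H : Matrix (Fin n) (Fin n) ℝ} {Bq : Matrix (Fin n) (Fin m) ℝ} {h : ℝ}
  {P Q : Matrix (Fin n) (Fin n) ℝ} {R : Matrix (Fin m) (Fin m) ℝ}

lemma mpcCost_eq_sum_range (x r : Fin n → ℝ) (U : Fin N → Fin m → ℝ) :
    mpcCost Aq Bq H h P Q R x r U =
      trackingError Aq H Bq h x r U N ⬝ᵥ (P *ᵥ trackingError Aq H Bq h x r U N) +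
        ∑ i ∈ Finset.range N,
          (trackingError Aq H Bq h x r U i ⬝ᵥ (Q *ᵥ trackingError Aq H Bq h x r U i) +
            inputAt U i ⬝ᵥ (R *ᵥ inputAt U i)) := by
  rw [mpcCost, ← Fin.sum_univ_eq_sum_range (fun i =>
    trackingError Aq H Bq h x r U i ⬝ᵥ (Q *ᵥ trackingError Aq H Bq h x r U i) +
      inputAt U i ⬝ᵥ (R *ᵥ inputAt U i))]
  simp only [inputAt_fin, trackingError]

lemma mpcCost_nonneg (hP : P.PosSemidef) (hQ : Q.PosSemidef) (hR : R.PosSemidef)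
    (x r : Fin n → ℝ) (U : Fin N → Fin m → ℝ) : 0 ≤ mpcCost Aq Bq H h P Q R x r U :=
  add_nonneg (hP.dotProduct_mulVec_nonneg_real _) (Finset.sum_nonneg fun _ _ =>
    add_nonneg (hQ.dotProduct_mulVec_nonneg_real _) (hR.dotProduct_mulVec_nonneg_real _))

lemma mpcCost_self_zero (hA : Aq = NormedSpace.exp (h • H)) (r : Fin n → ℝ) :
    mpcCost Aq Bq H h P Q R r r (0 : Fin N → Fin m → ℝ) = 0 := by
  simp [mpcCost, predState_zero_input Bq h hA]

lemma mpcCost_shiftSeq_le (hR : R.PosSemidef) (hA : Aq = NormedSpace.exp (h • H))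
    (hneg : (-(Q - P + Aqᵀ * P * Aq)).PosSemidef) (x r : Fin n → ℝ) (U : Fin N → Fin m → ℝ) :
    mpcCost Aq Bq H h P Q R (predState Aq Bq h x U 1) (NormedSpace.exp (h • H) *ᵥ r)
        (shiftSeq U) ≤
      mpcCost Aq Bq H h P Q R x r U - (x - r) ⬝ᵥ (Q *ᵥ (x - r)) := by
  set e := trackingError Aq H Bq h x r U
  set ℓ : ℕ → ℝ := fun i => e i ⬝ᵥ (Q *ᵥ e i) + inputAt U i ⬝ᵥ (R *ᵥ inputAt U i)
  have hshift : mpcCost Aq Bq H h P Q R (predState Aq Bq h x U 1)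
      (NormedSpace.exp (h • H) *ᵥ r) (shiftSeq U) =
      (Aq *ᵥ e N) ⬝ᵥ (P *ᵥ (Aq *ᵥ e N)) + ∑ i ∈ Finset.range N, ℓ (i + 1) := by
    simp only [mpcCost_eq_sum_range, trackingError_shiftSeq, inputAt_shiftSeq,
      trackingError_horizon_succ hA, e, ℓ]
  have htelescope : ∑ i ∈ Finset.range N, ℓ (i + 1) = ∑ i ∈ Finset.range N, ℓ i + ℓ N - ℓ 0 := by
    linarith [Finset.sum_range_succ' ℓ N, Finset.sum_range_succ ℓ N]
  have hℓN : ℓ N = e N ⬝ᵥ (Q *ᵥ e N) := by simp [ℓ, inputAt_horizon]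
  have hℓ0 : (x - r) ⬝ᵥ (Q *ᵥ (x - r)) ≤ ℓ 0 := by
    simpa [ℓ, e, trackingError_zero] using hR.dotProduct_mulVec_nonneg_real (inputAt U 0)
  have hterminal : (Aq *ᵥ e N) ⬝ᵥ (P *ᵥ (Aq *ᵥ e N)) + e N ⬝ᵥ (Q *ᵥ e N) ≤
      e N ⬝ᵥ (P *ᵥ e N) := by
    have := hneg.dotProduct_mulVec_nonneg_real (e N)
    simp only [neg_mulVec, dotProduct_neg, add_mulVec, sub_mulVec, dotProduct_add,
      dotProduct_sub, ← mulVec_mulVec, mul_assoc, dotProduct_mulVec (e N) Aqᵀ,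
      vecMul_transpose] at this
    linarith
  rw [hshift, htelescope, mpcCost_eq_sum_range]
  linarith

end Cost

section ValueFunction

variable {n m N : ℕ} {Aq H : Matrix (Fin n) (Fin n) ℝ} {Bq : Matrix (Fin n) (Fin m) ℝ} {h : ℝ}
  {P Q : Matrix (Fin n) (Fin n) ℝ} {R : Matrix (Fin m) (Fin m) ℝ}

lemma valueFn_le_mpcCost (hP : P.PosSemidef) (hQ : Q.PosSemidef) (hR : R.PosSemidef)
    (x r : Fin n → ℝ) {U : Fin N → Fin m → ℝ} (hU : U ∈ quantSet m N) :
    valueFn (N := N) Aq Bq H h P Q R x r ≤ mpcCost Aq Bq H h P Q R x r U :=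
  csInf_le ⟨0, by rintro _ ⟨V, -, rfl⟩; exact mpcCost_nonneg hP hQ hR x r V⟩ ⟨U, hU, rfl⟩

lemma valueFn_nonneg (hP : P.PosSemidef) (hQ : Q.PosSemidef) (hR : R.PosSemidef)
    (x r : Fin n → ℝ) : 0 ≤ valueFn (N := N) Aq Bq H h P Q R x r :=
  le_csInf ⟨_, 0, zero_mem_quantSet, rfl⟩ (by
    rintro _ ⟨U, -, rfl⟩; exact mpcCost_nonneg hP hQ hR x r U)

lemma valueFn_eq_mpcCost_of_isMin {x r : Fin n → ℝ} {U : Fin N → Fin m → ℝ}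
    (hU : U ∈ quantSet m N)
    (hmin : ∀ V ∈ quantSet m N, mpcCost Aq Bq H h P Q R x r U ≤ mpcCost Aq Bq H h P Q R x r V) :
    valueFn (N := N) Aq Bq H h P Q R x r = mpcCost Aq Bq H h P Q R x r U :=
  IsLeast.csInf_eq ⟨⟨U, hU, rfl⟩, by rintro _ ⟨V, hV, rfl⟩; exact hmin V hV⟩

lemma valueFn_self (hP : P.PosSemidef) (hQ : Q.PosSemidef) (hR : R.PosSemidef)
    (hA : Aq = NormedSpace.exp (h • H)) (r : Fin n → ℝ) :
    valueFn (N := N) Aq Bq H h P Q R r r = 0 :=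
  le_antisymm ((valueFn_le_mpcCost hP hQ hR r r zero_mem_quantSet).trans_eq
    (mpcCost_self_zero hA r)) (valueFn_nonneg hP hQ hR r r)

lemma valueFn_predState_one_le (hP : P.PosSemidef) (hQ : Q.PosSemidef) (hR : R.PosSemidef)
    (hA : Aq = NormedSpace.exp (h • H)) (hneg : (-(Q - P + Aqᵀ * P * Aq)).PosSemidef)
    {x r : Fin n → ℝ} {U : Fin N → Fin m → ℝ} (hU : U ∈ quantSet m N)
    (hmin : ∀ V ∈ quantSet m N, mpcCost Aq Bq H h P Q R x r U ≤ mpcCost Aq Bq H h P Q R x r V) :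
    valueFn (N := N) Aq Bq H h P Q R (predState Aq Bq h x U 1) (NormedSpace.exp (h • H) *ᵥ r) ≤
      valueFn (N := N) Aq Bq H h P Q R x r - (x - r) ⬝ᵥ (Q *ᵥ (x - r)) := by
  rw [valueFn_eq_mpcCost_of_isMin hU hmin]
  exact (valueFn_le_mpcCost hP hQ hR _ _ (shiftSeq_mem_quantSet hU)).trans
    (mpcCost_shiftSeq_le hR hA hneg x r U)

end ValueFunction

theorem stmt8_general {n m N : ℕ} (hN : 0 < N) (h : ℝ)
    (Aq H : Matrix (Fin n) (Fin n) ℝ) (Bq : Matrix (Fin n) (Fin m) ℝ)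
    (P Q : Matrix (Fin n) (Fin n) ℝ) (R : Matrix (Fin m) (Fin m) ℝ)
    (hP : P.PosDef) (hQ : Q.PosDef) (hR : R.PosDef)
    (hA : Aq = NormedSpace.exp (h • H))
    (hneg : (-(Q - P + Aqᵀ * P * Aq)).PosDef)
    (xq r : ℕ → (Fin n → ℝ)) (Ustar : ℕ → (Fin N → Fin m → ℝ))
    (hmem : ∀ k, Ustar k ∈ quantSet m N)
    (hmin : ∀ k, ∀ U ∈ quantSet m N,
      mpcCost Aq Bq H h P Q R (xq k) (r k) (Ustar k) ≤
        mpcCost Aq Bq H h P Q R (xq k) (r k) U)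
    (hx : ∀ k, xq (k + 1) = Aq *ᵥ xq k + h • (Bq *ᵥ Ustar k ⟨0, hN⟩))
    (hr : ∀ k, r (k + 1) = NormedSpace.exp (h • H) *ᵥ r k) :
    (∀ k, valueFn (N := N) Aq Bq H h P Q R (xq (k + 1)) (r (k + 1)) <
            valueFn (N := N) Aq Bq H h P Q R (xq k) (r k) ∨
          valueFn (N := N) Aq Bq H h P Q R (xq k) (r k) = 0) ∧
    (∀ k, valueFn (N := N) Aq Bq H h P Q R (xq k) (r k) = 0 →
      ∀ j, k ≤ j → valueFn (N := N) Aq Bq H h P Q R (xq j) (r j) = 0) := by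
  set V : ℕ → ℝ := fun k => valueFn (N := N) Aq Bq H h P Q R (xq k) (r k)
  have hV_nonneg k : 0 ≤ V k := valueFn_nonneg hP.posSemidef hQ.posSemidef hR.posSemidef _ _
  have hV_step k : V (k + 1) ≤ V k - (xq k - r k) ⬝ᵥ (Q *ᵥ (xq k - r k)) := by
    have hx1 : xq (k + 1) = predState Aq Bq h (xq k) (Ustar k) 1 := by
      rw [hx k, predState_succ, ← inputAt_fin (Ustar k) ⟨0, hN⟩]; rfl
    simpa only [V, hx1, hr k] using valueFn_predState_one_le hP.posSemidef hQ.posSemidef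
      hR.posSemidef hA hneg.posSemidef (hmem k) (hmin k)
  refine ⟨fun k => ?_, fun k hk j hkj => ?_⟩
  · refine (hV_nonneg k).eq_or_lt.symm.imp (fun hpos => ?_) Eq.symm
    have hne : xq k - r k ≠ 0 := fun he => hpos.ne' <| by
      simp only [V, sub_eq_zero.mp he]
      exact valueFn_self hP.posSemidef hQ.posSemidef hR.posSemidef hA (r k)
    linarith [hV_step k, hQ.dotProduct_mulVec_pos_real hne]
  · induction j, hkj using Nat.le_induction with
    | base => exact hk
    | succ j _ ih =>
      linarith [hV_step j, hV_nonneg (j + 1),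
        hQ.posSemidef.dotProduct_mulVec_nonneg_real (xq j - r j)]

/-- Theorem 1, strict decrease form: along any quantized MPC closed-loop
trajectory, at each step the value function strictly decreases or is already zero; and once
it is zero it stays zero forever. -/
theorem stmt8 {n m N : ℕ} (hN : 0 < N) (h : ℝ) (hh : 0 < h)
    (Aq H : Matrix (Fin n) (Fin n) ℝ) (Bq : Matrix (Fin n) (Fin m) ℝ)
    (P Q : Matrix (Fin n) (Fin n) ℝ) (R : Matrix (Fin m) (Fin m) ℝ)
    (hP : P.PosDef) (hQ : Q.PosDef) (hR : R.PosDef)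
    (hA : Aq = NormedSpace.exp (h • H))
    (hneg : (-(Q - P + Aqᵀ * P * Aq)).PosDef)
    (xq r : ℕ → (Fin n → ℝ)) (Ustar : ℕ → (Fin N → Fin m → ℝ))
    (hmem : ∀ k, Ustar k ∈ quantSet m N)
    (hmin : ∀ k, ∀ U ∈ quantSet m N,
      mpcCost Aq Bq H h P Q R (xq k) (r k) (Ustar k) ≤
        mpcCost Aq Bq H h P Q R (xq k) (r k) U)
    (hx : ∀ k, xq (k + 1) = Aq *ᵥ xq k + h • (Bq *ᵥ Ustar k ⟨0, hN⟩))
    (hr : ∀ k, r (k + 1) = NormedSpace.exp (h • H) *ᵥ r k) :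
    (∀ k, valueFn (N := N) Aq Bq H h P Q R (xq (k + 1)) (r (k + 1)) <
            valueFn (N := N) Aq Bq H h P Q R (xq k) (r k) ∨
          valueFn (N := N) Aq Bq H h P Q R (xq k) (r k) = 0) ∧
    (∀ k, valueFn (N := N) Aq Bq H h P Q R (xq k) (r k) = 0 →
      ∀ j, k ≤ j → valueFn (N := N) Aq Bq H h P Q R (xq j) (r j) = 0) :=
  stmt8_general hN h Aq H Bq P Q R hP hQ hR hA hneg xq r Ustar hmem hmin hx hr
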